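/- If M ∈ SL₂(ℕ) has L,U-factorization of length ℓ and trace T, and M is irreducible, then the largest eigenvalue λ of M satisfies (ℓ + 1 + √((ℓ+3)(ℓ−1)))/2 ≤ λ, and λ ≤ φ^ℓ if ℓ is even, λ ≤ F_ℓ + √(F_ℓ² − 1) if ℓ is odd. -/

import Mathlib

/-!
Write `L = J Q` and `U = Q J` with `Q = !![1,1;1,0]` and `J = !![0,1;1,0]`, so that a word of
length `ℓ` in `L, U` is a word with `ℓ` letters `Q` and `ℓ` letters `J`. Since
`Q J Qᵏ J Q ≤ Qᵏ⁺²` entrywise, two `J`s enclosing a block of `Q`s can be deleted, so the product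
is entrywise below some `Jˣ Qᵃ Jʸ Qᵇ Jᶻ` with `a + b = ℓ` and `x + y + z ≡ ℓ (mod 2)`. Up to
rotation this is `Qˡ` or `J Qᵃ J Qᵇ` when `ℓ` is even, of trace at most
`tr Qˡ = φˡ + ψˡ = φˡ + φ⁻ˡ`, and `J Qˡ` when `ℓ` is odd, of trace `2 F_ℓ`.

An irreducible word contains both letters, hence a factor `L U` or `U L`, whose off-diagonal
entries are positive; rotated to the front, it makes every further letter add at least one to
the trace, so `T ≥ ℓ + 1`. Both bounds pass to `λ`, which is increasing in `T`.
-/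

def L : Matrix (Fin 2) (Fin 2) ℕ := !![1,0;1,1]
def U : Matrix (Fin 2) (Fin 2) ℕ := !![1,1;0,1]

noncomputable def phi : ℝ := (1 + Real.sqrt 5) / 2

open Real goldenRatio

section EntrywiseLE

variable {l m n o : Type*}

def EntrywiseLE (A B : Matrix m n ℕ) : Prop := ∀ i j, A i j ≤ B i j

infix:50 " ≤ₑ " => EntrywiseLE

theorem EntrywiseLE.refl (A : Matrix m n ℕ) : A ≤ₑ A := fun _ _ => le_rfl

theorem EntrywiseLE.trans {A B C : Matrix m n ℕ} (h₁ : A ≤ₑ B) (h₂ : B ≤ₑ C) :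
    A ≤ₑ C := fun i j => (h₁ i j).trans (h₂ i j)

theorem EntrywiseLE.mul [Fintype n] {A B : Matrix l n ℕ} {C D : Matrix n o ℕ}
    (h₁ : A ≤ₑ B) (h₂ : C ≤ₑ D) : A * C ≤ₑ B * D := fun i k => by
  simp only [Matrix.mul_apply]
  exact Finset.sum_le_sum fun j _ => Nat.mul_le_mul (h₁ i j) (h₂ j k)

theorem EntrywiseLE.trace_le [Fintype n] {A B : Matrix n n ℕ} (h : A ≤ₑ B) :
    A.trace ≤ B.trace :=
  Finset.sum_le_sum fun i _ => h i i

theorem EntrywiseLE.of_eq {A B : Matrix m n ℕ} (h : A = B) : A ≤ₑ B := h ▸ .refl A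

instance : @Trans (Matrix m n ℕ) (Matrix m n ℕ) (Matrix m n ℕ)
    EntrywiseLE EntrywiseLE EntrywiseLE :=
  ⟨EntrywiseLE.trans⟩

end EntrywiseLE

def Q : Matrix (Fin 2) (Fin 2) ℕ := !![1, 1; 1, 0]

def J : Matrix (Fin 2) (Fin 2) ℕ := !![0, 1; 1, 0]

theorem L_eq_J_mul_Q : L = J * Q := by
  ext i j; fin_cases i <;> fin_cases j <;> rfl

theorem U_eq_Q_mul_J : U = Q * J := by
  ext i j; fin_cases i <;> fin_cases j <;> rfl

theorem J_mul_J : J * J = 1 := by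
  ext i j; fin_cases i <;> fin_cases j <;> rfl

theorem isSymm_Q : Q.IsSymm := by
  ext i j; fin_cases i <;> fin_cases j <;> rfl

theorem Q_sq : Q ^ 2 = Q + 1 := by
  ext i j; fin_cases i <;> fin_cases j <;> rfl

theorem Q_pow_succ (k : ℕ) :
    Q ^ (k + 1) = !![Nat.fib (k + 2), Nat.fib (k + 1); Nat.fib (k + 1), Nat.fib k] := by
  induction k with
  | zero => ext i j; fin_cases i <;> fin_cases j <;> rfl
  | succ k ih =>
    rw [pow_succ, ih, Q, Matrix.mul_fin_two]
    ext i j; fin_cases i <;> fin_cases j <;> simp [Nat.fib_add_two] <;> ring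

theorem Q_pow_apply_one_one_le (k : ℕ) : (Q ^ k) 1 1 ≤ (Q ^ k) 0 0 := by
  cases k with
  | zero => simp
  | succ k => simpa [Q_pow_succ] using Nat.fib_mono (by omega)

theorem trace_J_mul_Q_pow (k : ℕ) : (J * Q ^ k).trace = 2 * Nat.fib k := by
  cases k with
  | zero => rfl
  | succ k => simp [Q_pow_succ, J, Matrix.trace_fin_two]; ring

theorem trace_Q_pow (k : ℕ) : ((Q ^ k).trace : ℝ) = φ ^ k + ψ ^ k := by
  induction k using Nat.twoStepInduction with
  | zero => norm_num
  | one => simp [Q, Matrix.trace_fin_two, goldenRatio_add_goldenConj]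
  | more k ih₀ ih₁ =>
    have hQ : Q ^ (k + 2) = Q ^ (k + 1) + Q ^ k := by
      rw [pow_add, Q_sq, mul_add, mul_one, pow_succ]
    rw [hQ, Matrix.trace_add, Nat.cast_add, ih₀, ih₁]
    linear_combination (-φ ^ k) * goldenRatio_sq + (-ψ ^ k) * goldenConj_sq

theorem Q_mul_J_mul_mul_J_mul_Q_le {M : Matrix (Fin 2) (Fin 2) ℕ} (hM : M.IsSymm)
    (h : M 1 1 ≤ M 0 0) : Q * J * M * J * Q ≤ₑ Q * M * Q := by
  have hsymm := hM.apply 0 1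
  rw [Matrix.eta_fin_two M]
  intro i j
  fin_cases i <;> fin_cases j <;> simp [Q, J] <;> omega

theorem trace_J_mul_mul_J_mul_le {M N : Matrix (Fin 2) (Fin 2) ℕ} (hM : M.IsSymm)
    (hM' : M 1 1 ≤ M 0 0) (hN : N 1 1 ≤ N 0 0) : (J * M * J * N).trace ≤ (M * N).trace := by
  have hsymm := hM.apply 0 1
  rw [Matrix.eta_fin_two M, Matrix.eta_fin_two N]
  simp [J, Matrix.trace_fin_two]
  nlinarith [Nat.mul_le_mul hM' hN]

def jPow (b : Bool) : Matrix (Fin 2) (Fin 2) ℕ := bif b then J else 1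

theorem jPow_mul_J (b : Bool) : jPow b * J = jPow (!b) := by
  cases b <;> simp [jPow, J_mul_J]

theorem jPow_mul_jPow (b c : Bool) : jPow b * jPow c = jPow (b ^^ c) := by
  cases b <;> cases c <;> simp [jPow, J_mul_J]

def FibDominated (M : Matrix (Fin 2) (Fin 2) ℕ) (n j : ℕ) : Prop :=
  ∃ (x y z : Bool) (a b : ℕ), a + b = n ∧ (x ^^ y ^^ z) = decide (Odd j) ∧
    M ≤ₑ jPow x * Q ^ a * jPow y * Q ^ b * jPow z

namespace FibDominated

variable {M : Matrix (Fin 2) (Fin 2) ℕ} {n j : ℕ}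

theorem one : FibDominated 1 0 0 :=
  ⟨false, false, false, 0, 0, rfl, rfl, .of_eq (by simp [jPow])⟩

theorem mul_J (h : FibDominated M n j) : FibDominated (M * J) n (j + 1) := by
  obtain ⟨x, y, z, a, b, hab, hj, hM⟩ := h
  refine ⟨x, y, !z, a, b, hab, ?_, ?_⟩
  · simp only [Nat.odd_add_one, decide_not, ← hj]
    cases z <;> simp
  · rw [← jPow_mul_J, ← mul_assoc]
    exact hM.mul (.refl J)

theorem mul_Q (h : FibDominated M n j) : FibDominated (M * Q) (n + 1) j := by
  obtain ⟨x, y, z, a, b, rfl, hj, hM⟩ := h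
  suffices ∃ (x' y' z' : Bool) (a' b' : ℕ), a' + b' = a + b + 1 ∧
      (x' ^^ y' ^^ z') = (x ^^ y ^^ z) ∧
      jPow x * Q ^ a * jPow y * Q ^ b * jPow z * Q ≤ₑ
        jPow x' * Q ^ a' * jPow y' * Q ^ b' * jPow z' by
    obtain ⟨x', y', z', a', b', hab, hxyz, hle⟩ := this
    exact ⟨x', y', z', a', b', hab, hxyz.trans hj, (hM.mul (.refl Q)).trans hle⟩
  cases z
  · exact ⟨x, y, false, a, b + 1, by omega, rfl,
      .of_eq (by simp [jPow, pow_succ, mul_assoc])⟩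
  cases y
  · exact ⟨x, true, false, a + b, 1, rfl, by cases x <;> rfl,
      .of_eq (by simp [jPow, pow_add, mul_assoc])⟩
  cases a with
  | zero =>
    exact ⟨!x, true, false, b, 1, by omega, by cases x <;> rfl,
      .of_eq (by
        rw [pow_zero, mul_one, show jPow true = J from rfl, jPow_mul_J]
        simp [jPow])⟩
  | succ a =>
    refine ⟨x, false, false, a + b + 2, 0, by omega, by cases x <;> rfl, ?_⟩
    calc jPow x * Q ^ (a + 1) * jPow true * Q ^ b * jPow true * Q
        = jPow x * Q ^ a * (Q * J * Q ^ b * J * Q) := by simp [jPow, pow_succ, mul_assoc]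
      _ ≤ₑ jPow x * Q ^ a * (Q * Q ^ b * Q) :=
        (EntrywiseLE.refl _).mul
          (Q_mul_J_mul_mul_J_mul_Q_le (isSymm_Q.pow b) (Q_pow_apply_one_one_le b))
      _ = jPow x * Q ^ (a + b + 2) * jPow false * Q ^ 0 * jPow false := by
        rw [show a + b + 2 = a + (1 + b + 1) by omega, pow_add, pow_add, pow_add, pow_one]
        simp [jPow, mul_assoc]

theorem trace_le (h : FibDominated M n j) :
    M.trace ≤ if Odd j then 2 * Nat.fib n else (Q ^ n).trace := by
  obtain ⟨x, y, z, a, b, rfl, hj, hM⟩ := h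
  refine hM.trace_le.trans ?_
  rw [Matrix.trace_mul_comm, ← mul_assoc, ← mul_assoc, ← mul_assoc, jPow_mul_jPow,
    ← Bool.cond_decide, ← hj,
    show (x ^^ y ^^ z) = ((z ^^ x) ^^ y) by cases x <;> cases z <;> simp]
  generalize (z ^^ x) = e
  cases e <;> cases y
  · simp [jPow, ← pow_add]
  · simp only [jPow, cond_false, cond_true, one_mul, Bool.false_xor]
    rw [mul_assoc, Matrix.trace_mul_comm, mul_assoc, ← pow_add, trace_J_mul_Q_pow, add_comm]
  · simp [jPow, mul_assoc, ← pow_add, trace_J_mul_Q_pow]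
  · simpa [jPow, ← pow_add] using
      trace_J_mul_mul_J_mul_le (isSymm_Q.pow a) (Q_pow_apply_one_one_le a)
        (Q_pow_apply_one_one_le b)

end FibDominated

theorem fibDominated_prod {w : List (Matrix (Fin 2) (Fin 2) ℕ)}
    (hw : ∀ A ∈ w, A = L ∨ A = U) : FibDominated w.prod w.length w.length := by
  induction w using List.reverseRecOn with
  | nil => exact .one
  | append_singleton w A ih =>
    have ih := ih fun B hB => hw B (List.mem_append_left _ hB)
    rw [List.prod_append, List.prod_singleton, List.length_append, List.length_singleton]
    rcases hw A (by simp) with rfl | rfl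
    · rw [L_eq_J_mul_Q, ← mul_assoc]
      exact ih.mul_J.mul_Q
    · rw [U_eq_Q_mul_J, ← mul_assoc]
      exact ih.mul_Q.mul_J

theorem List.exists_eq_append_cons_cons_ne {α : Type*} {l : List α} {a b : α} (ha : a ∈ l)
    (hb : b ∈ l) (hab : a ≠ b) : ∃ P x y S, l = P ++ x :: y :: S ∧ x ≠ y := by
  by_contra! h
  have hchain : l.IsChain (· = ·) :=
    List.isChain_iff_forall_rel_of_append_cons_cons.2 fun _ _ _ _ hl => h _ _ _ _ hl
  obtain ⟨c, hc⟩ : ∃ c, l.head? = some c :=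
    Option.isSome_iff_exists.1 (by cases l <;> simp_all)
  have hl := List.isChain_eq_iff_eq_replicate.1 hchain c hc
  exact hab <|
    (List.eq_of_mem_replicate (hl ▸ ha)).trans (List.eq_of_mem_replicate (hl ▸ hb)).symm

theorem L_pow_apply_zero_one (k : ℕ) : (L ^ k) 0 1 = 0 := by
  induction k with
  | zero => rfl
  | succ k ih => rw [pow_succ, Matrix.mul_apply, Fin.sum_univ_two, ih]; simp [L]

theorem U_pow_apply_one_zero (k : ℕ) : (U ^ k) 1 0 = 0 := by
  induction k with
  | zero => rfl
  | succ k ih => rw [pow_succ, Matrix.mul_apply, Fin.sum_univ_two, ih]; simp [U]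

theorem L_mem_and_U_mem_of_pow_pos {w : List (Matrix (Fin 2) (Fin 2) ℕ)}
    (hw : ∀ A ∈ w, A = L ∨ A = U) (hpos : ∃ p, ∀ i j, 0 < (w.prod ^ p) i j) :
    L ∈ w ∧ U ∈ w := by
  obtain ⟨p, hp⟩ := hpos
  constructor <;> by_contra hnot
  · have hprod := w.prod_eq_pow_card U fun A hA =>
      (hw A hA).resolve_left (by rintro rfl; exact hnot hA)
    simpa [hprod, ← pow_mul, U_pow_apply_one_zero] using hp 1 0
  · have hprod := w.prod_eq_pow_card L fun A hA =>
      (hw A hA).resolve_right (by rintro rfl; exact hnot hA)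
    simpa [hprod, ← pow_mul, L_pow_apply_zero_one] using hp 0 1

theorem trace_add_length_le_trace_mul_prod {M : Matrix (Fin 2) (Fin 2) ℕ} (h01 : 1 ≤ M 0 1)
    (h10 : 1 ≤ M 1 0) {w : List (Matrix (Fin 2) (Fin 2) ℕ)} (hw : ∀ A ∈ w, A = L ∨ A = U) :
    M.trace + w.length ≤ (M * w.prod).trace := by
  induction w generalizing M with
  | nil => simp
  | cons A w ih =>
    have step : 1 ≤ (M * A) 0 1 ∧ 1 ≤ (M * A) 1 0 ∧ M.trace + 1 ≤ (M * A).trace := by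
      rw [Matrix.eta_fin_two M] at h01 h10 ⊢
      rcases hw A (by simp) with rfl | rfl <;>
        simp [L, U, Matrix.trace_fin_two] at h01 h10 ⊢ <;> omega
    have := ih step.1 step.2.1 fun B hB => hw B (by simp [hB])
    rw [List.prod_cons, ← mul_assoc, List.length_cons]
    omega

theorem length_add_one_le_trace_prod {w : List (Matrix (Fin 2) (Fin 2) ℕ)}
    (hw : ∀ A ∈ w, A = L ∨ A = U) (hL : L ∈ w) (hU : U ∈ w) :
    w.length + 1 ≤ w.prod.trace := by
  have hLU : L ≠ U := fun h => by simpa [L, U] using congrFun (congrFun h 0) 1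
  obtain ⟨P, x, y, S, rfl, hxy⟩ := List.exists_eq_append_cons_cons_ne hL hU hLU
  have hxy' : (x * y) 0 1 = 1 ∧ (x * y) 1 0 = 1 ∧ (x * y).trace = 3 := by
    rcases hw x (by simp) with rfl | rfl <;> rcases hw y (by simp) with rfl | rfl <;>
      first | exact absurd rfl hxy | decide
  have hrot : (P ++ x :: y :: S).prod.trace = (x * y * (S ++ P).prod).trace := by
    rw [List.prod_append, Matrix.trace_mul_comm, List.prod_cons, List.prod_cons,
      List.prod_append]
    simp only [mul_assoc]
  have := trace_add_length_le_trace_mul_prod hxy'.1.ge hxy'.2.1.ge (w := S ++ P)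
    fun A hA => hw A (by simp at hA ⊢; tauto)
  simp only [List.length_append, List.length_cons] at this ⊢
  omega

/-- The larger root of `X² - t X + 1`: the largest eigenvalue of a `2 × 2` matrix of determinant
one and trace `t`. -/
noncomputable def largerRoot (t : ℝ) : ℝ := (t + √(t ^ 2 - 4)) / 2

theorem largerRoot_mono {s t : ℝ} (hs : 0 ≤ s) (hst : s ≤ t) :
    largerRoot s ≤ largerRoot t := by
  have : √(s ^ 2 - 4) ≤ √(t ^ 2 - 4) := Real.sqrt_le_sqrt (by nlinarith)
  unfold largerRoot
  linarith

theorem largerRoot_add_inv {x : ℝ} (hx : 1 ≤ x) : largerRoot (x + x⁻¹) = x := by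
  have hx0 : 0 < x := by linarith
  have hsq : (x + x⁻¹) ^ 2 - 4 = (x - x⁻¹) ^ 2 := by field_simp; ring
  have hinv : x⁻¹ ≤ x := (inv_le_one_of_one_le₀ hx).trans hx
  rw [largerRoot, hsq, Real.sqrt_sq (sub_nonneg.2 hinv)]
  ring

theorem largerRoot_two_mul (f : ℝ) : largerRoot (2 * f) = f + √(f ^ 2 - 1) := by
  rw [largerRoot, show (2 * f) ^ 2 - 4 = 2 ^ 2 * (f ^ 2 - 1) by ring,
    Real.sqrt_mul (by norm_num), Real.sqrt_sq (by norm_num)]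
  ring

theorem goldenConj_pow_of_even {n : ℕ} (hn : Even n) : ψ ^ n = (φ ^ n)⁻¹ := by
  rw [← inv_pow, inv_goldenRatio, hn.neg_pow]

theorem stmt_19 (ℓ : ℕ) (w : List (Matrix (Fin 2) (Fin 2) ℕ))
    (hw : ∀ A ∈ w, A = L ∨ A = U) (hlen : w.length = ℓ)
    (hirr : ∃ p, ∀ i j, 0 < (w.prod ^ p) i j)
    (T : ℕ) (hT : Matrix.trace w.prod = T) :
    let lam : ℝ := ((T : ℝ) + Real.sqrt ((T : ℝ) ^ 2 - 4)) / 2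
    ((ℓ : ℝ) + 1 + Real.sqrt (((ℓ : ℝ) + 3) * ((ℓ : ℝ) - 1))) / 2 ≤ lam ∧
    (Even ℓ → lam ≤ phi ^ ℓ) ∧
    (Odd ℓ →
      lam ≤ (Nat.fib ℓ : ℝ) + Real.sqrt ((Nat.fib ℓ : ℝ) ^ 2 - 1)) := by
  intro lam
  change _ ≤ largerRoot T ∧ (Even ℓ → largerRoot T ≤ _) ∧ (Odd ℓ → largerRoot T ≤ _)
  obtain ⟨hL, hU⟩ := L_mem_and_U_mem_of_pow_pos hw hirr
  have hlower := length_add_one_le_trace_prod hw hL hU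
  have hupper := (fibDominated_prod hw).trace_le
  rw [hT, hlen] at hlower hupper
  refine ⟨?_, fun he => ?_, fun ho => ?_⟩
  · rw [show ((ℓ : ℝ) + 3) * (ℓ - 1) = ((ℓ : ℝ) + 1) ^ 2 - 4 by ring]
    exact largerRoot_mono (by positivity) (by exact_mod_cast hlower)
  · rw [if_neg (Nat.not_odd_iff_even.2 he)] at hupper
    calc largerRoot T ≤ largerRoot (Q ^ ℓ).trace :=
          largerRoot_mono (by positivity) (by exact_mod_cast hupper)
      _ = phi ^ ℓ := by
        rw [trace_Q_pow, goldenConj_pow_of_even he,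
          largerRoot_add_inv (one_le_pow₀ one_lt_goldenRatio.le)]
        rfl
  · rw [if_pos ho] at hupper
    calc largerRoot T ≤ largerRoot (2 * Nat.fib ℓ) :=
          largerRoot_mono (by positivity) (by exact_mod_cast hupper)
      _ = _ := largerRoot_two_mul _
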